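/- Under the identification setting above with M = (M_j, M_{-j}) and the additional cross-world independence assumption that M_j(1) is conditionally independent of M_{-j}(0) given C, the cross-world mean τ = E[Y(1, M_j(1), M_{-j}(0))] equals Σ_c P(C = c) Σ_{m_j, m_{-j}} E[Y | A = 1, M = (m_j, m_{-j}), C = c] · P(M_j = m_j | A = 1, C = c) · P(M_{-j} = m_{-j} | A = 0, C = c). -/
import Mathlib


open Finset

open scoped Classical in
noncomputable def Pr {Ω : Type*} [Fintype Ω] (p : Ω → ℝ) (E : Ω → Prop) : ℝ :=
  ∑ ω, if E ω then p ω else 0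

noncomputable def EV {Ω : Type*} [Fintype Ω] (p : Ω → ℝ) (X : Ω → ℝ) : ℝ :=
  ∑ ω, p ω * X ω

noncomputable def cPr {Ω : Type*} [Fintype Ω] (p : Ω → ℝ) (E F : Ω → Prop) : ℝ :=
  Pr p (fun ω => E ω ∧ F ω) / Pr p F

open scoped Classical in
noncomputable def cEV {Ω : Type*} [Fintype Ω] (p : Ω → ℝ) (X : Ω → ℝ) (F : Ω → Prop) : ℝ :=
  (∑ ω, if F ω then p ω * X ω else 0) / Pr p F

section helpers

open scoped Classical

variable {Ω : Type*} [Fintype Ω]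

open scoped Classical in
noncomputable def WS (p : Ω → ℝ) (F : Ω → Prop) (f : Ω → ℝ) : ℝ :=
  ∑ ω, if F ω then p ω * f ω else 0

lemma Pr_def (p : Ω → ℝ) (E : Ω → Prop) : Pr p E = ∑ ω, if E ω then p ω else 0 := rfl

lemma cEV_eq (p : Ω → ℝ) (X : Ω → ℝ) (F : Ω → Prop) : cEV p X F = WS p F X / Pr p F := rfl

lemma Pr_congr (p : Ω → ℝ) {E F : Ω → Prop} (h : ∀ ω, E ω ↔ F ω) : Pr p E = Pr p F := by
  have hEF : E = F := funext fun ω => propext (h ω)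
  rw [hEF]

lemma Pr_false (p : Ω → ℝ) : Pr p (fun _ => False) = 0 := by
  simp [Pr_def]

lemma Pr_nonneg (p : Ω → ℝ) (hp : ∀ ω, 0 ≤ p ω) (E : Ω → Prop) : 0 ≤ Pr p E :=
  Finset.sum_nonneg fun ω _ => by by_cases h : E ω <;> simp [h, hp ω]

lemma Pr_zero_imp (p : Ω → ℝ) (hp : ∀ ω, 0 ≤ p ω) {E : Ω → Prop} (h : Pr p E = 0) :
    ∀ ω, E ω → p ω = 0 := by
  intro ω hω
  have h0 : ∀ x ∈ Finset.univ, (0:ℝ) ≤ (if E x then p x else 0) := fun x _ => by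
    split <;> simp [hp x]
  have := (Finset.sum_eq_zero_iff_of_nonneg h0).1 h ω (Finset.mem_univ ω)
  simpa [hω] using this

lemma WS_one (p : Ω → ℝ) (E : Ω → Prop) : WS p E (fun _ => 1) = Pr p E := by
  simp only [WS, Pr_def, mul_one]

lemma Pr_fiber {β : Type*} [Fintype β] (p : Ω → ℝ) (V : Ω → β) (E : Ω → Prop) :
    Pr p E = ∑ mm : β, Pr p (fun ω => E ω ∧ V ω = mm) := by
  simp only [Pr_def]
  conv_rhs => rw [Finset.sum_comm]
  refine Finset.sum_congr rfl fun ω _ => ?_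
  by_cases h : E ω <;> simp [h, Finset.sum_ite_eq]

lemma WS_congr (p : Ω → ℝ) {E F : Ω → Prop} {f g : Ω → ℝ} (hEF : ∀ ω, E ω ↔ F ω)
    (hfg : ∀ ω, E ω → f ω = g ω) : WS p E f = WS p F g := by
  unfold WS
  refine Finset.sum_congr rfl fun ω _ => ?_
  by_cases h : E ω
  · rw [if_pos h, if_pos ((hEF ω).1 h), hfg ω h]
  · rw [if_neg h, if_neg fun hf => h ((hEF ω).2 hf)]

lemma WS_zero (p : Ω → ℝ) (hp : ∀ ω, 0 ≤ p ω) {E F : Ω → Prop} (hF : Pr p F = 0)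
    (hEF : ∀ ω, E ω → F ω) (f : Ω → ℝ) : WS p E f = 0 := by
  unfold WS
  refine Finset.sum_eq_zero fun ω _ => ?_
  by_cases h : E ω
  · rw [if_pos h, Pr_zero_imp p hp hF ω (hEF ω h), zero_mul]
  · rw [if_neg h]

lemma WS_fiber {β : Type*} [Fintype β] (p : Ω → ℝ) (V : Ω → β) (E : Ω → Prop) (f : Ω → ℝ) :
    WS p E f = ∑ mm : β, WS p (fun ω => E ω ∧ V ω = mm) f := by
  simp only [WS]
  conv_rhs => rw [Finset.sum_comm]
  refine Finset.sum_congr rfl fun ω _ => ?_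
  by_cases h : E ω <;> simp [h, Finset.sum_ite_eq]

lemma WS_factor {γ : Type*} (p : Ω → ℝ) (W : Ω → γ) (E F : Ω → Prop) (r : ℝ)
    (h : ∀ yv : γ, Pr p (fun ω => E ω ∧ W ω = yv) = r * Pr p (fun ω => F ω ∧ W ω = yv))
    (g : γ → ℝ) : WS p E (fun ω => g (W ω)) = r * WS p F (fun ω => g (W ω)) := by
  have key : ∀ (G : Ω → Prop), WS p G (fun ω => g (W ω))
      = ∑ yv ∈ Finset.univ.image W, g yv * Pr p (fun ω => G ω ∧ W ω = yv) := by
    intro G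
    simp only [WS]
    have step1 : ∀ ω : Ω, (if G ω then p ω * g (W ω) else 0)
        = ∑ yv ∈ Finset.univ.image W, if G ω ∧ W ω = yv then p ω * g yv else 0 := by
      intro ω
      by_cases hG : G ω
      · rw [if_pos hG]
        rw [Finset.sum_congr rfl (fun yv _ => show (if G ω ∧ W ω = yv then p ω * g yv else 0)
            = (if W ω = yv then p ω * g yv else 0) from by
          by_cases hy : W ω = yv <;> simp [hG, hy])]
        rw [Finset.sum_ite_eq (Finset.univ.image W) (W ω) (fun yv => p ω * g yv),
          if_pos (Finset.mem_image_of_mem W (Finset.mem_univ ω))]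
      · simp [hG]
    rw [Finset.sum_congr rfl fun ω _ => step1 ω, Finset.sum_comm]
    refine Finset.sum_congr rfl fun yv _ => ?_
    simp only [Pr_def, Finset.mul_sum]
    refine Finset.sum_congr rfl fun ω _ => ?_
    by_cases h1 : G ω ∧ W ω = yv
    · rw [if_pos h1, if_pos h1]; ring
    · rw [if_neg h1, if_neg h1, mul_zero]
  rw [key E, key F, Finset.mul_sum]
  refine Finset.sum_congr rfl fun yv _ => ?_
  rw [h yv]; ring

lemma cPr_congr (p : Ω → ℝ) {E E' F : Ω → Prop} (h : ∀ ω, F ω → (E ω ↔ E' ω)) :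
    cPr p E F = cPr p E' F := by
  unfold cPr
  congr 1
  exact Pr_congr p fun ω => ⟨fun ⟨he, hf⟩ => ⟨(h ω hf).1 he, hf⟩, fun ⟨he, hf⟩ => ⟨(h ω hf).2 he, hf⟩⟩

lemma Lindep_gen {β : Type*} (p : Ω → ℝ) (A : Ω → Fin 2) (T : Ω → β) (a : Fin 2)
    (h : ∀ t, Pr p (fun ω => A ω = a ∧ T ω = t)
      = Pr p (fun ω => A ω = a) * Pr p (fun ω => T ω = t))
    (Q : β → Prop) (g : β → ℝ) :
    WS p (fun ω => A ω = a ∧ Q (T ω)) (fun ω => g (T ω))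
      = Pr p (fun ω => A ω = a) * WS p (fun ω => Q (T ω)) (fun ω => g (T ω)) := by
  refine WS_factor p T _ _ _ (fun t => ?_) g
  by_cases hQ : Q t
  · have e1 : Pr p (fun ω => (A ω = a ∧ Q (T ω)) ∧ T ω = t) = Pr p (fun ω => A ω = a ∧ T ω = t) :=
      Pr_congr p fun ω => ⟨fun h1 => ⟨h1.1.1, h1.2⟩, fun h1 => ⟨⟨h1.1, by rw [h1.2]; exact hQ⟩, h1.2⟩⟩
    have e2 : Pr p (fun ω => Q (T ω) ∧ T ω = t) = Pr p (fun ω => T ω = t) :=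
      Pr_congr p fun ω => ⟨And.right, fun h1 => ⟨by rw [h1]; exact hQ, h1⟩⟩
    rw [e1, e2, h t]
  · have e1 : Pr p (fun ω => (A ω = a ∧ Q (T ω)) ∧ T ω = t) = 0 := by
      rw [Pr_congr p (E := fun ω => (A ω = a ∧ Q (T ω)) ∧ T ω = t) (F := fun _ => False)
        fun ω => ⟨fun h1 => hQ (h1.2 ▸ h1.1.2), False.elim⟩]
      exact Pr_false p
    have e2 : Pr p (fun ω => Q (T ω) ∧ T ω = t) = 0 := by
      rw [Pr_congr p (E := fun ω => Q (T ω) ∧ T ω = t) (F := fun _ => False)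
        fun ω => ⟨fun h1 => hQ (h1.2 ▸ h1.1), False.elim⟩]
      exact Pr_false p
    rw [e1, e2, mul_zero]

lemma LCI_gen {β γ : Type*} [Fintype β] (p : Ω → ℝ) (hp : ∀ ω, 0 ≤ p ω)
    (F : Ω → Prop) (V : Ω → β) (W : Ω → γ)
    (h : ∀ (mm : β) (yv : γ), cPr p (fun ω => V ω = mm ∧ W ω = yv) F
      = cPr p (fun ω => V ω = mm) F * cPr p (fun ω => W ω = yv) F)
    (Q : β → Prop) (g : γ → ℝ) :
    WS p (fun ω => F ω ∧ Q (V ω)) (fun ω => g (W ω))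
      = cPr p (fun ω => Q (V ω)) F * WS p F (fun ω => g (W ω)) := by
  by_cases hF : Pr p F = 0
  · have h1 : WS p (fun ω => F ω ∧ Q (V ω)) (fun ω => g (W ω)) = 0 :=
      WS_zero p hp hF (fun ω hω => hω.1) _
    have h2 : WS p F (fun ω => g (W ω)) = 0 := WS_zero p hp hF (fun ω hω => hω) _
    rw [h1, h2, mul_zero]
  · have key : ∀ mm yv, Pr p (fun ω => (F ω ∧ V ω = mm) ∧ W ω = yv)
        = cPr p (fun ω => V ω = mm) F * Pr p (fun ω => F ω ∧ W ω = yv) := by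
      intro mm yv
      have h' := h mm yv
      simp only [cPr] at h' ⊢
      have e1 : Pr p (fun ω => (F ω ∧ V ω = mm) ∧ W ω = yv)
          = Pr p (fun ω => (V ω = mm ∧ W ω = yv) ∧ F ω) := Pr_congr p fun ω => by tauto
      have e2 : Pr p (fun ω => F ω ∧ W ω = yv) = Pr p (fun ω => (W ω = yv) ∧ F ω) :=
        Pr_congr p fun ω => by tauto
      rw [e1, e2]
      have h'' := (div_eq_iff hF).mp h'
      rw [h'', mul_assoc, div_mul_cancel₀ _ hF]
    have fib := WS_fiber p V (fun ω => F ω ∧ Q (V ω)) (fun ω => g (W ω))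
    rw [fib]
    have step : ∀ mm : β, WS p (fun ω => (F ω ∧ Q (V ω)) ∧ V ω = mm) (fun ω => g (W ω))
        = (if Q mm then cPr p (fun ω => V ω = mm) F else 0) * WS p F (fun ω => g (W ω)) := by
      intro mm
      by_cases hQ : Q mm
      · rw [if_pos hQ]
        have e : WS p (fun ω => (F ω ∧ Q (V ω)) ∧ V ω = mm) (fun ω => g (W ω))
            = WS p (fun ω => F ω ∧ V ω = mm) (fun ω => g (W ω)) :=
          WS_congr p (fun ω => ⟨fun h1 => ⟨h1.1.1, h1.2⟩,
            fun h1 => ⟨⟨h1.1, by rw [h1.2]; exact hQ⟩, h1.2⟩⟩) (fun _ _ => rfl)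
        rw [e]
        exact WS_factor p W _ _ _ (key mm) g
      · rw [if_neg hQ, zero_mul]
        have e : WS p (fun ω => (F ω ∧ Q (V ω)) ∧ V ω = mm) (fun ω => g (W ω))
            = WS p (fun _ => False) (fun ω => g (W ω)) :=
          WS_congr p (fun ω => ⟨fun h1 => hQ (h1.2 ▸ h1.1.2), False.elim⟩) (fun _ _ => rfl)
        rw [e]
        simp [WS]
    rw [Finset.sum_congr rfl fun mm _ => step mm, ← Finset.sum_mul]
    congr 1
    simp only [cPr]
    have e3 : ∀ mm : β, (if Q mm then Pr p (fun ω => V ω = mm ∧ F ω) / Pr p F else 0)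
        = (if Q mm then Pr p (fun ω => V ω = mm ∧ F ω) else 0) / Pr p F := fun mm => by
      split_ifs <;> simp
    rw [Finset.sum_congr rfl fun mm _ => e3 mm, ← Finset.sum_div]
    congr 1
    rw [Pr_fiber p V (fun ω => Q (V ω) ∧ F ω)]
    refine Finset.sum_congr rfl fun mm _ => ?_
    by_cases hQ : Q mm
    · rw [if_pos hQ]
      exact Pr_congr p fun ω => ⟨fun h1 => ⟨⟨by rw [h1.1]; exact hQ, h1.2⟩, h1.1⟩,
        fun h1 => ⟨h1.2, h1.1.2⟩⟩
    · rw [if_neg hQ]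
      rw [Pr_congr p (E := fun ω => (Q (V ω) ∧ F ω) ∧ V ω = mm) (F := fun _ => False)
        fun ω => ⟨fun h1 => hQ (h1.2 ▸ h1.1.1), False.elim⟩]
      exact (Pr_false p).symm

end helpers

/-- Identification of the spillover mediation functional τ = E[Y(1, M_j(1), M_{-j}(0))]
under randomization, consistency, sequential ignorability, positivity, and
between-individual cross-world conditional independence. -/
theorem tau_identification
    {Ω 𝓜₁ 𝓜₂ 𝓒 : Type*} [Fintype Ω] [Fintype 𝓜₁] [Fintype 𝓜₂] [Fintype 𝓒]
    (p : Ω → ℝ) (hp : ∀ ω, 0 ≤ p ω) (hp1 : ∑ ω, p ω = 1)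
    (A : Ω → Fin 2) (C : Ω → 𝓒) (Mj : Ω → 𝓜₁) (Mmj : Ω → 𝓜₂) (Y : Ω → ℝ)
    (Ypot : Fin 2 → 𝓜₁ × 𝓜₂ → Ω → ℝ)
    (Mjpot : Fin 2 → Ω → 𝓜₁) (Mmjpot : Fin 2 → Ω → 𝓜₂)
    (π : ℝ) (hπ : 0 < π ∧ π < 1) (hA : Pr p (fun ω => A ω = 1) = π)
    (hindep : ∀ (a : Fin 2)
        (t : 𝓒 × (Fin 2 → 𝓜₁ × 𝓜₂ → ℝ) × (Fin 2 → 𝓜₁) × (Fin 2 → 𝓜₂)),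
      Pr p (fun ω => A ω = a ∧
          (C ω, fun a' m => Ypot a' m ω, fun a' => Mjpot a' ω,
            fun a' => Mmjpot a' ω) = t) =
        Pr p (fun ω => A ω = a) *
        Pr p (fun ω => (C ω, fun a' m => Ypot a' m ω, fun a' => Mjpot a' ω,
          fun a' => Mmjpot a' ω) = t))
    (hconsMj : ∀ ω, Mj ω = Mjpot (A ω) ω)
    (hconsMmj : ∀ ω, Mmj ω = Mmjpot (A ω) ω)
    (hconsY : ∀ ω, Y ω = Ypot (A ω) (Mj ω, Mmj ω) ω)
    (hseq : ∀ (a a' : Fin 2) (c : 𝓒)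
        (mm : (𝓜₁ × 𝓜₂) × (𝓜₁ × 𝓜₂)) (yv : 𝓜₁ × 𝓜₂ → ℝ),
      cPr p (fun ω => ((Mjpot 1 ω, Mmjpot 1 ω), (Mjpot 0 ω, Mmjpot 0 ω)) = mm ∧
              (fun m => Ypot a m ω) = yv)
          (fun ω => A ω = a' ∧ C ω = c) =
        cPr p (fun ω => ((Mjpot 1 ω, Mmjpot 1 ω), (Mjpot 0 ω, Mmjpot 0 ω)) = mm)
          (fun ω => A ω = a' ∧ C ω = c) *
        cPr p (fun ω => (fun m => Ypot a m ω) = yv) (fun ω => A ω = a' ∧ C ω = c))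
    (hposM : ∀ (a : Fin 2) (c : 𝓒) (mj : 𝓜₁) (mmj : 𝓜₂),
      0 < Pr p (fun ω => C ω = c) →
      0 < cPr p (fun ω => Mj ω = mj ∧ Mmj ω = mmj) (fun ω => A ω = a ∧ C ω = c))
    (hcrossworld : ∀ (c : 𝓒) (mj : 𝓜₁) (mmj : 𝓜₂),
      0 < Pr p (fun ω => C ω = c) →
      cPr p (fun ω => Mjpot 1 ω = mj ∧ Mmjpot 0 ω = mmj) (fun ω => C ω = c) =
        cPr p (fun ω => Mjpot 1 ω = mj) (fun ω => C ω = c) *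
        cPr p (fun ω => Mmjpot 0 ω = mmj) (fun ω => C ω = c)) :
    EV p (fun ω => Ypot 1 (Mjpot 1 ω, Mmjpot 0 ω) ω) =
      ∑ c : 𝓒, Pr p (fun ω => C ω = c) *
        ∑ mj : 𝓜₁, ∑ mmj : 𝓜₂,
          cEV p Y (fun ω => A ω = 1 ∧ Mj ω = mj ∧ Mmj ω = mmj ∧ C ω = c) *
          cPr p (fun ω => Mj ω = mj) (fun ω => A ω = 1 ∧ C ω = c) *
          cPr p (fun ω => Mmj ω = mmj) (fun ω => A ω = 0 ∧ C ω = c) := by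
  obtain ⟨hπ0, hπ1⟩ := hπ
  have hπn : π ≠ 0 := ne_of_gt hπ0
  have hA0 : Pr p (fun ω => A ω = 0) = 1 - π := by
    have hsum : ∑ a : Fin 2, Pr p (fun ω => A ω = a) = 1 := by
      rw [← hp1]
      simp only [Pr_def]
      rw [Finset.sum_comm]
      refine Finset.sum_congr rfl fun ω _ => ?_
      rw [Fin.sum_univ_two]
      by_cases h : A ω = 0
      · have h1 : A ω ≠ 1 := by rw [h]; decide
        simp [h, h1]
      · have h1 : A ω = 1 := by omega
        simp [h, h1]
    rw [Fin.sum_univ_two, hA] at hsum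
    linarith
  have hA0n : Pr p (fun ω => A ω = 0) ≠ 0 := by
    rw [hA0]; exact ne_of_gt (by linarith)
  have hA1n : Pr p (fun ω => A ω = 1) ≠ 0 := by rw [hA]; exact hπn
  have hEV : EV p (fun ω => Ypot 1 (Mjpot 1 ω, Mmjpot 0 ω) ω)
      = ∑ c : 𝓒, WS p (fun ω => C ω = c) (fun ω => Ypot 1 (Mjpot 1 ω, Mmjpot 0 ω) ω) := by
    simp only [EV, WS]
    conv_rhs => rw [Finset.sum_comm]
    refine Finset.sum_congr rfl fun ω _ => ?_
    rw [Finset.sum_eq_single (C ω) (fun b _ hb => if_neg fun h => hb h.symm)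
      (fun h => absurd (Finset.mem_univ _) h), if_pos rfl]
  rw [hEV]
  refine Finset.sum_congr rfl fun c _ => ?_
  by_cases hc : Pr p (fun ω => C ω = c) = 0
  · rw [hc, zero_mul]
    exact WS_zero p hp hc (fun ω h => h) _
  have hcpos : 0 < Pr p (fun ω => C ω = c) :=
    lt_of_le_of_ne (Pr_nonneg p hp _) (Ne.symm hc)
  have split2 : WS p (fun ω => C ω = c) (fun ω => Ypot 1 (Mjpot 1 ω, Mmjpot 0 ω) ω)
      = ∑ mj : 𝓜₁, ∑ mmj : 𝓜₂,
          WS p (fun ω => C ω = c ∧ Mjpot 1 ω = mj ∧ Mmjpot 0 ω = mmj)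
            (fun ω => Ypot 1 (mj, mmj) ω) := by
    rw [WS_fiber p (fun ω => (Mjpot 1 ω, Mmjpot 0 ω)) (fun ω => C ω = c)
      (fun ω => Ypot 1 (Mjpot 1 ω, Mmjpot 0 ω) ω), Fintype.sum_prod_type]
    refine Finset.sum_congr rfl fun mj _ => Finset.sum_congr rfl fun mmj _ => ?_
    refine WS_congr p (fun ω => ?_) (fun ω hω => by rw [hω.2])
    constructor
    · rintro ⟨h1, h2⟩
      exact ⟨h1, congrArg Prod.fst h2, congrArg Prod.snd h2⟩
    · rintro ⟨h1, h2, h3⟩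
      exact ⟨h1, by rw [h2, h3]⟩
  rw [split2, Finset.mul_sum]
  refine Finset.sum_congr rfl fun mj _ => ?_
  rw [Finset.mul_sum]
  refine Finset.sum_congr rfl fun mmj _ => ?_
  -- Step B : insert A = 1 via randomization
  have hB : WS p (fun ω => A ω = 1 ∧ C ω = c ∧ Mjpot 1 ω = mj ∧ Mmjpot 0 ω = mmj)
        (fun ω => Ypot 1 (mj, mmj) ω)
      = π * WS p (fun ω => C ω = c ∧ Mjpot 1 ω = mj ∧ Mmjpot 0 ω = mmj)
        (fun ω => Ypot 1 (mj, mmj) ω) := by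
    have h1 := Lindep_gen p A
      (fun ω => (C ω, fun a' m => Ypot a' m ω, fun a' => Mjpot a' ω, fun a' => Mmjpot a' ω))
      1 (hindep 1)
      (fun t => t.1 = c ∧ t.2.2.1 1 = mj ∧ t.2.2.2 0 = mmj) (fun t => t.2.1 1 (mj, mmj))
    rw [hA] at h1
    exact h1
  -- conditional independence engine at (A=1, C=c)
  have hLCI := fun (Q : (𝓜₁ × 𝓜₂) × (𝓜₁ × 𝓜₂) → Prop) (g : ((𝓜₁ × 𝓜₂) → ℝ) → ℝ) =>
    LCI_gen p hp (fun ω => A ω = 1 ∧ C ω = c)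
      (fun ω => ((Mjpot 1 ω, Mmjpot 1 ω), (Mjpot 0 ω, Mmjpot 0 ω)))
      (fun ω => (fun m => Ypot 1 m ω))
      (fun mm yv => hseq 1 1 c mm yv) Q g
  have hK1 : WS p (fun ω => A ω = 1 ∧ C ω = c ∧ Mjpot 1 ω = mj ∧ Mmjpot 0 ω = mmj)
        (fun ω => Ypot 1 (mj, mmj) ω)
      = cPr p (fun ω => Mjpot 1 ω = mj ∧ Mmjpot 0 ω = mmj) (fun ω => A ω = 1 ∧ C ω = c)
        * WS p (fun ω => A ω = 1 ∧ C ω = c) (fun ω => Ypot 1 (mj, mmj) ω) := by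
    have h1 := hLCI (fun mm => mm.1.1 = mj ∧ mm.2.2 = mmj) (fun yv => yv (mj, mmj))
    have e : WS p (fun ω => A ω = 1 ∧ C ω = c ∧ Mjpot 1 ω = mj ∧ Mmjpot 0 ω = mmj)
          (fun ω => Ypot 1 (mj, mmj) ω)
        = WS p (fun ω => (A ω = 1 ∧ C ω = c) ∧ (Mjpot 1 ω = mj ∧ Mmjpot 0 ω = mmj))
          (fun ω => Ypot 1 (mj, mmj) ω) :=
      WS_congr p (fun ω => by tauto) (fun _ _ => rfl)
    rw [e]
    exact h1
  -- Pr(A=1, C=c) = π Pr(C=c)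
  have hPrF1 : Pr p (fun ω => A ω = 1 ∧ C ω = c) = π * Pr p (fun ω => C ω = c) := by
    have h1 := Lindep_gen p A
      (fun ω => (C ω, fun a' m => Ypot a' m ω, fun a' => Mjpot a' ω, fun a' => Mmjpot a' ω))
      1 (hindep 1) (fun t => t.1 = c) (fun _ => (1:ℝ))
    rw [hA] at h1
    calc Pr p (fun ω => A ω = 1 ∧ C ω = c)
        = WS p (fun ω => A ω = 1 ∧ C ω = c) (fun _ => (1:ℝ)) := (WS_one p _).symm
      _ = π * WS p (fun ω => C ω = c) (fun _ => (1:ℝ)) := h1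
      _ = π * Pr p (fun ω => C ω = c) := by rw [WS_one]
  have hPrF1ne : Pr p (fun ω => A ω = 1 ∧ C ω = c) ≠ 0 := by
    rw [hPrF1]; exact mul_ne_zero hπn (ne_of_gt hcpos)
  -- conditioning transfer between (A=a, C=c) and (C=c) for functions of the potential tuple
  have trans : ∀ (a : Fin 2)
      (Q : 𝓒 × (Fin 2 → 𝓜₁ × 𝓜₂ → ℝ) × (Fin 2 → 𝓜₁) × (Fin 2 → 𝓜₂) → Prop),
      Pr p (fun ω => A ω = a) ≠ 0 →
      cPr p (fun ω => Q (C ω, fun a' m => Ypot a' m ω, fun a' => Mjpot a' ω,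
          fun a' => Mmjpot a' ω)) (fun ω => A ω = a ∧ C ω = c)
        = cPr p (fun ω => Q (C ω, fun a' m => Ypot a' m ω, fun a' => Mjpot a' ω,
          fun a' => Mmjpot a' ω)) (fun ω => C ω = c) := by
    intro a Q hane
    have hnum : Pr p (fun ω => Q (C ω, fun a' m => Ypot a' m ω, fun a' => Mjpot a' ω,
          fun a' => Mmjpot a' ω) ∧ (A ω = a ∧ C ω = c))
        = Pr p (fun ω => A ω = a) * Pr p (fun ω => Q (C ω, fun a' m => Ypot a' m ω,
          fun a' => Mjpot a' ω, fun a' => Mmjpot a' ω) ∧ C ω = c) := by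
      have h1 := Lindep_gen p A
        (fun ω => (C ω, fun a' m => Ypot a' m ω, fun a' => Mjpot a' ω, fun a' => Mmjpot a' ω))
        a (hindep a) (fun t => Q t ∧ t.1 = c) (fun _ => (1:ℝ))
      calc Pr p (fun ω => Q (C ω, fun a' m => Ypot a' m ω, fun a' => Mjpot a' ω,
            fun a' => Mmjpot a' ω) ∧ (A ω = a ∧ C ω = c))
          = WS p (fun ω => A ω = a ∧ (Q (C ω, fun a' m => Ypot a' m ω, fun a' => Mjpot a' ω,
            fun a' => Mmjpot a' ω) ∧ C ω = c)) (fun _ => (1:ℝ)) := by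
            rw [WS_one]; exact Pr_congr p fun ω => by tauto
        _ = Pr p (fun ω => A ω = a) * WS p (fun ω => Q (C ω, fun a' m => Ypot a' m ω,
            fun a' => Mjpot a' ω, fun a' => Mmjpot a' ω) ∧ C ω = c) (fun _ => (1:ℝ)) := h1
        _ = Pr p (fun ω => A ω = a) * Pr p (fun ω => Q (C ω, fun a' m => Ypot a' m ω,
            fun a' => Mjpot a' ω, fun a' => Mmjpot a' ω) ∧ C ω = c) := by rw [WS_one]
    have hden : Pr p (fun ω => A ω = a ∧ C ω = c)
        = Pr p (fun ω => A ω = a) * Pr p (fun ω => C ω = c) := by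
      have h1 := Lindep_gen p A
        (fun ω => (C ω, fun a' m => Ypot a' m ω, fun a' => Mjpot a' ω, fun a' => Mmjpot a' ω))
        a (hindep a) (fun t => t.1 = c) (fun _ => (1:ℝ))
      calc Pr p (fun ω => A ω = a ∧ C ω = c)
          = WS p (fun ω => A ω = a ∧ C ω = c) (fun _ => (1:ℝ)) := (WS_one p _).symm
        _ = Pr p (fun ω => A ω = a) * WS p (fun ω => C ω = c) (fun _ => (1:ℝ)) := h1
        _ = Pr p (fun ω => A ω = a) * Pr p (fun ω => C ω = c) := by rw [WS_one]
    simp only [cPr]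
    rw [hnum, hden, mul_div_mul_left _ _ hane]
  -- cross-world factorization of the mediator pair
  have hconsPr1 : cPr p (fun ω => Mjpot 1 ω = mj) (fun ω => A ω = 1 ∧ C ω = c)
      = cPr p (fun ω => Mj ω = mj) (fun ω => A ω = 1 ∧ C ω = c) :=
    cPr_congr p fun ω hF => by rw [hconsMj ω, hF.1]
  have hconsPr0 : cPr p (fun ω => Mmjpot 0 ω = mmj) (fun ω => A ω = 0 ∧ C ω = c)
      = cPr p (fun ω => Mmj ω = mmj) (fun ω => A ω = 0 ∧ C ω = c) :=
    cPr_congr p fun ω hF => by rw [hconsMmj ω, hF.1]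
  have hpair : cPr p (fun ω => Mjpot 1 ω = mj ∧ Mmjpot 0 ω = mmj) (fun ω => A ω = 1 ∧ C ω = c)
      = cPr p (fun ω => Mj ω = mj) (fun ω => A ω = 1 ∧ C ω = c)
        * cPr p (fun ω => Mmj ω = mmj) (fun ω => A ω = 0 ∧ C ω = c) := by
    calc cPr p (fun ω => Mjpot 1 ω = mj ∧ Mmjpot 0 ω = mmj) (fun ω => A ω = 1 ∧ C ω = c)
        = cPr p (fun ω => Mjpot 1 ω = mj ∧ Mmjpot 0 ω = mmj) (fun ω => C ω = c) :=
          trans 1 (fun t => t.2.2.1 1 = mj ∧ t.2.2.2 0 = mmj) hA1n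
      _ = cPr p (fun ω => Mjpot 1 ω = mj) (fun ω => C ω = c)
            * cPr p (fun ω => Mmjpot 0 ω = mmj) (fun ω => C ω = c) :=
          hcrossworld c mj mmj hcpos
      _ = cPr p (fun ω => Mjpot 1 ω = mj) (fun ω => A ω = 1 ∧ C ω = c)
            * cPr p (fun ω => Mmjpot 0 ω = mmj) (fun ω => A ω = 0 ∧ C ω = c) := by
          exact congrArg₂ (· * ·) (trans 1 (fun t => t.2.2.1 1 = mj) hA1n).symm
            (trans 0 (fun t => t.2.2.2 0 = mmj) hA0n).symm
      _ = cPr p (fun ω => Mj ω = mj) (fun ω => A ω = 1 ∧ C ω = c)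
            * cPr p (fun ω => Mmj ω = mmj) (fun ω => A ω = 0 ∧ C ω = c) :=
          congrArg₂ (· * ·) hconsPr1 hconsPr0
  -- positivity pieces
  have hq : cPr p (fun ω => Mjpot 1 ω = mj ∧ Mmjpot 1 ω = mmj) (fun ω => A ω = 1 ∧ C ω = c)
      = cPr p (fun ω => Mj ω = mj ∧ Mmj ω = mmj) (fun ω => A ω = 1 ∧ C ω = c) :=
    cPr_congr p fun ω hF => by rw [hconsMj ω, hconsMmj ω, hF.1]
  have hqne : cPr p (fun ω => Mjpot 1 ω = mj ∧ Mmjpot 1 ω = mmj)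
      (fun ω => A ω = 1 ∧ C ω = c) ≠ 0 := by
    rw [hq]; exact ne_of_gt (hposM 1 c mj mmj hcpos)
  -- expression of the conditional expectation
  have hEiff : ∀ ω, (A ω = 1 ∧ Mj ω = mj ∧ Mmj ω = mmj ∧ C ω = c)
      ↔ ((A ω = 1 ∧ C ω = c) ∧ (Mjpot 1 ω = mj ∧ Mmjpot 1 ω = mmj)) := by
    intro ω
    constructor
    · rintro ⟨h1, h2, h3, h4⟩
      exact ⟨⟨h1, h4⟩, by rw [← h2, hconsMj ω, h1], by rw [← h3, hconsMmj ω, h1]⟩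
    · rintro ⟨⟨h1, h4⟩, h2, h3⟩
      exact ⟨h1, by rw [hconsMj ω, h1]; exact h2, by rw [hconsMmj ω, h1]; exact h3, h4⟩
  have hnum : WS p (fun ω => A ω = 1 ∧ Mj ω = mj ∧ Mmj ω = mmj ∧ C ω = c) Y
      = cPr p (fun ω => Mjpot 1 ω = mj ∧ Mmjpot 1 ω = mmj) (fun ω => A ω = 1 ∧ C ω = c)
        * WS p (fun ω => A ω = 1 ∧ C ω = c) (fun ω => Ypot 1 (mj, mmj) ω) := by
    have h1 := hLCI (fun mm => mm.1.1 = mj ∧ mm.1.2 = mmj) (fun yv => yv (mj, mmj))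
    have e : WS p (fun ω => A ω = 1 ∧ Mj ω = mj ∧ Mmj ω = mmj ∧ C ω = c) Y
        = WS p (fun ω => (A ω = 1 ∧ C ω = c) ∧ (Mjpot 1 ω = mj ∧ Mmjpot 1 ω = mmj))
          (fun ω => Ypot 1 (mj, mmj) ω) :=
      WS_congr p hEiff (fun ω hω => by rw [hconsY ω, hω.1, hω.2.1, hω.2.2.1])
    rw [e]
    exact h1
  have hden : Pr p (fun ω => A ω = 1 ∧ Mj ω = mj ∧ Mmj ω = mmj ∧ C ω = c)
      = cPr p (fun ω => Mjpot 1 ω = mj ∧ Mmjpot 1 ω = mmj) (fun ω => A ω = 1 ∧ C ω = c)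
        * Pr p (fun ω => A ω = 1 ∧ C ω = c) := by
    have h1 := hLCI (fun mm => mm.1.1 = mj ∧ mm.1.2 = mmj) (fun _ => (1:ℝ))
    calc Pr p (fun ω => A ω = 1 ∧ Mj ω = mj ∧ Mmj ω = mmj ∧ C ω = c)
        = WS p (fun ω => (A ω = 1 ∧ C ω = c) ∧ (Mjpot 1 ω = mj ∧ Mmjpot 1 ω = mmj))
          (fun _ => (1:ℝ)) := by rw [WS_one]; exact Pr_congr p hEiff
      _ = cPr p (fun ω => Mjpot 1 ω = mj ∧ Mmjpot 1 ω = mmj) (fun ω => A ω = 1 ∧ C ω = c)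
            * WS p (fun ω => A ω = 1 ∧ C ω = c) (fun _ => (1:ℝ)) := h1
      _ = cPr p (fun ω => Mjpot 1 ω = mj ∧ Mmjpot 1 ω = mmj) (fun ω => A ω = 1 ∧ C ω = c)
            * Pr p (fun ω => A ω = 1 ∧ C ω = c) := by rw [WS_one]
  have hcEV : cEV p Y (fun ω => A ω = 1 ∧ Mj ω = mj ∧ Mmj ω = mmj ∧ C ω = c)
        * Pr p (fun ω => A ω = 1 ∧ C ω = c)
      = WS p (fun ω => A ω = 1 ∧ C ω = c) (fun ω => Ypot 1 (mj, mmj) ω) := by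
    rw [cEV_eq, hnum, hden, mul_div_mul_left _ _ hqne, div_mul_cancel₀ _ hPrF1ne]
  -- assemble
  apply mul_left_cancel₀ hπn
  calc π * WS p (fun ω => C ω = c ∧ Mjpot 1 ω = mj ∧ Mmjpot 0 ω = mmj)
        (fun ω => Ypot 1 (mj, mmj) ω)
      = WS p (fun ω => A ω = 1 ∧ C ω = c ∧ Mjpot 1 ω = mj ∧ Mmjpot 0 ω = mmj)
          (fun ω => Ypot 1 (mj, mmj) ω) := hB.symm
    _ = cPr p (fun ω => Mjpot 1 ω = mj ∧ Mmjpot 0 ω = mmj) (fun ω => A ω = 1 ∧ C ω = c)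
          * WS p (fun ω => A ω = 1 ∧ C ω = c) (fun ω => Ypot 1 (mj, mmj) ω) := hK1
    _ = (cPr p (fun ω => Mj ω = mj) (fun ω => A ω = 1 ∧ C ω = c)
          * cPr p (fun ω => Mmj ω = mmj) (fun ω => A ω = 0 ∧ C ω = c))
          * (cEV p Y (fun ω => A ω = 1 ∧ Mj ω = mj ∧ Mmj ω = mmj ∧ C ω = c)
            * Pr p (fun ω => A ω = 1 ∧ C ω = c)) := by rw [hpair, hcEV]
    _ = π * (Pr p (fun ω => C ω = c) *
          (cEV p Y (fun ω => A ω = 1 ∧ Mj ω = mj ∧ Mmj ω = mmj ∧ C ω = c) *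
            cPr p (fun ω => Mj ω = mj) (fun ω => A ω = 1 ∧ C ω = c) *
            cPr p (fun ω => Mmj ω = mmj) (fun ω => A ω = 0 ∧ C ω = c))) := by
        rw [hPrF1]; ring
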